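/- For every finite simple graph G = (V,E) and every pair of distinct vertices v, w of G, the graph G*v*w*v is exactly the graph obtained from G by exchanging the labels of v and w: for all vertices x, y, xy is an edge of G*v*w*v if and only if τ(x)τ(y) is an edge of G, where τ is the transposition of V swapping v and w. In particular, G*v*w*v is isomorphic to G, and G*v*w is isomorphic to G*w. -/

import Mathlib

universe u

/-- The Seidel complement of `G` at `v`: adjacency between the open neighborhood of `v`
and the set of vertices different from `v` and not adjacent to `v` is complemented,
all other adjacencies are unchanged. -/
def seidelCompl {V : Type u} (G : SimpleGraph V) (v : V) : SimpleGraph V where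
  Adj x y := x ≠ y ∧
    Xor' (G.Adj x y)
      ((G.Adj v x ∧ ¬ G.Adj v y ∧ y ≠ v) ∨ (G.Adj v y ∧ ¬ G.Adj v x ∧ x ≠ v))
  symm := ⟨by
    rintro x y ⟨hxy, h⟩
    refine ⟨hxy.symm, ?_⟩
    have h1 : G.Adj x y ↔ G.Adj y x := G.adj_comm x y
    unfold Xor' at h ⊢
    first
      | (unfold Xor at h ⊢; tauto)
      | (simp only [xor_def] at h ⊢; tauto)⟩
  loopless := ⟨fun x h => h.1 rfl⟩

/-!
Away from `v`, the Seidel complement at `v` adds the indicator of `N(v)` at both endpoints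
modulo 2, `xy ↦ xy ⊕ vx ⊕ vy`, and it keeps the edges at `v`. In the composite `*v*w*v` these
contributions cancel in pairs, leaving `G` off `{v, w}` and exchanging the neighbourhoods of `v`
and `w`. Since `*v` is an involution that commutes with relabelling,
`G*v*w = (G*v*w*v)*v ≅ G*τ(v) = G*w`.
-/

namespace SimpleGraph

variable {V : Type u} (G : SimpleGraph V)

theorem seidelCompl_adj (v x y : V) :
    (seidelCompl G v).Adj x y ↔ x ≠ y ∧
      Xor (G.Adj x y) ((G.Adj v x ∧ ¬G.Adj v y ∧ y ≠ v) ∨ (G.Adj v y ∧ ¬G.Adj v x ∧ x ≠ v)) :=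
  Iff.rfl

theorem seidelCompl_adj_self_left (v x : V) : (seidelCompl G v).Adj v x ↔ G.Adj v x := by
  simpa [seidelCompl_adj, xor_def] using fun h : G.Adj v x => G.ne_of_adj h

theorem seidelCompl_adj_self_right (v x : V) : (seidelCompl G v).Adj x v ↔ G.Adj x v := by
  rw [adj_comm, seidelCompl_adj_self_left, adj_comm]

theorem seidelCompl_adj_of_ne {v x y : V} (hx : x ≠ v) (hy : y ≠ v) :
    (seidelCompl G v).Adj x y ↔ Xor (G.Adj x y) (Xor (G.Adj v x) (G.Adj v y)) := by
  rcases eq_or_ne x y with rfl | hxy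
  · simp
  · simp only [seidelCompl_adj, hx, hy, hxy, ne_eq, not_false_eq_true, true_and, and_true]
    grind [Xor]

theorem seidelCompl_seidelCompl (v : V) : seidelCompl (seidelCompl G v) v = G := by
  ext x y
  rcases eq_or_ne x v with rfl | hx
  · exact (seidelCompl_adj_self_left _ _ _).trans (seidelCompl_adj_self_left _ _ _)
  rcases eq_or_ne y v with rfl | hy
  · exact (seidelCompl_adj_self_right _ _ _).trans (seidelCompl_adj_self_right _ _ _)
  simp only [seidelCompl_adj_of_ne _ hx hy, seidelCompl_adj_self_left]
  grind [Xor]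

def Iso.seidelCompl {W : Type*} {G₁ : SimpleGraph V} {G₂ : SimpleGraph W} (e : G₁ ≃g G₂)
    (v : V) : _root_.seidelCompl G₁ v ≃g _root_.seidelCompl G₂ (e v) where
  toEquiv := e.toEquiv
  map_rel_iff' := by simp [seidelCompl_adj, e.map_adj_iff, e.injective.eq_iff]

theorem seidelCompl_triple_adj_of_ne {v w x y : V} (hvw : v ≠ w) (hxv : x ≠ v) (hxw : x ≠ w)
    (hyv : y ≠ v) (hyw : y ≠ w) :
    (seidelCompl (seidelCompl (seidelCompl G v) w) v).Adj x y ↔ G.Adj x y := by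
  simp only [seidelCompl_adj_of_ne _ hxv hyv, seidelCompl_adj_of_ne _ hxw hyw,
    seidelCompl_adj_self_left, seidelCompl_adj_of_ne _ hvw hxw, seidelCompl_adj_of_ne _ hvw hyw,
    seidelCompl_adj_of_ne _ hvw.symm hxv, seidelCompl_adj_of_ne _ hvw.symm hyv]
  grind [Xor]

variable [DecidableEq V] {v w : V}

theorem seidelCompl_triple_adj_left (hvw : v ≠ w) (y : V) :
    (seidelCompl (seidelCompl (seidelCompl G v) w) v).Adj v y ↔ G.Adj w (Equiv.swap v w y) := by
  rw [seidelCompl_adj_self_left]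
  rcases eq_or_ne y v with rfl | hyv
  · simp
  rcases eq_or_ne y w with rfl | hyw
  · simp [seidelCompl_adj_self_left, seidelCompl_adj_self_right, G.adj_comm]
  simp only [Equiv.swap_apply_of_ne_of_ne hyv hyw, seidelCompl_adj_of_ne _ hvw hyw,
    seidelCompl_adj_of_ne _ hvw.symm hyv, seidelCompl_adj_self_left, seidelCompl_adj_self_right]
  grind [Xor, G.adj_comm]

theorem seidelCompl_triple_adj_right (hvw : v ≠ w) (y : V) :
    (seidelCompl (seidelCompl (seidelCompl G v) w) v).Adj w y ↔ G.Adj v (Equiv.swap v w y) := by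
  rcases eq_or_ne y v with rfl | hyv
  · simp [seidelCompl_adj_self_left, seidelCompl_adj_self_right, G.adj_comm]
  rcases eq_or_ne y w with rfl | hyw
  · simp
  simp only [Equiv.swap_apply_of_ne_of_ne hyv hyw, seidelCompl_adj_of_ne _ hvw.symm hyv,
    seidelCompl_adj_of_ne _ hvw hyw, seidelCompl_adj_self_left, seidelCompl_adj_self_right]
  grind [Xor, G.adj_comm]

theorem seidelCompl_triple_adj (hvw : v ≠ w) (x y : V) :
    (seidelCompl (seidelCompl (seidelCompl G v) w) v).Adj x y ↔
      G.Adj (Equiv.swap v w x) (Equiv.swap v w y) := by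
  rcases eq_or_ne x v with rfl | hxv
  · simpa using G.seidelCompl_triple_adj_left hvw y
  rcases eq_or_ne x w with rfl | hxw
  · simpa using G.seidelCompl_triple_adj_right hvw y
  rw [Equiv.swap_apply_of_ne_of_ne hxv hxw]
  rcases eq_or_ne y v with rfl | hyv
  · simpa [adj_comm, Equiv.swap_apply_of_ne_of_ne hxv hxw] using
      G.seidelCompl_triple_adj_left hvw x
  rcases eq_or_ne y w with rfl | hyw
  · simpa [adj_comm, Equiv.swap_apply_of_ne_of_ne hxv hxw] using
      G.seidelCompl_triple_adj_right hvw x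
  rw [Equiv.swap_apply_of_ne_of_ne hyv hyw]
  exact G.seidelCompl_triple_adj_of_ne hvw hxv hxw hyv hyw

end SimpleGraph

theorem seidelCompl_triple_swap_general {V : Type u} [DecidableEq V]
    (G : SimpleGraph V) (v w : V) (hvw : v ≠ w) :
    (∀ x y : V, (seidelCompl (seidelCompl (seidelCompl G v) w) v).Adj x y ↔
        G.Adj (Equiv.swap v w x) (Equiv.swap v w y)) ∧
    Nonempty ((seidelCompl (seidelCompl (seidelCompl G v) w) v) ≃g G) ∧
    Nonempty ((seidelCompl (seidelCompl G v) w) ≃g seidelCompl G w) := by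
  have hswap := G.seidelCompl_triple_adj hvw
  let e : seidelCompl (seidelCompl (seidelCompl G v) w) v ≃g G :=
    ⟨Equiv.swap v w, (hswap _ _).symm⟩
  refine ⟨hswap, ⟨e⟩, ⟨?_⟩⟩
  simpa [SimpleGraph.seidelCompl_seidelCompl, e] using e.seidelCompl v

/-- For distinct vertices `v, w`, the graph `G*v*w*v` is exactly `G` with the labels of
`v` and `w` exchanged; in particular `G*v*w*v ≅ G` and `G*v*w ≅ G*w`. -/
theorem seidelCompl_triple_swap {V : Type u} [Fintype V] [DecidableEq V]
    (G : SimpleGraph V) (v w : V) (hvw : v ≠ w) :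
    (∀ x y : V, (seidelCompl (seidelCompl (seidelCompl G v) w) v).Adj x y ↔
        G.Adj (Equiv.swap v w x) (Equiv.swap v w y)) ∧
    Nonempty ((seidelCompl (seidelCompl (seidelCompl G v) w) v) ≃g G) ∧
    Nonempty ((seidelCompl (seidelCompl G v) w) ≃g seidelCompl G w) :=
  seidelCompl_triple_swap_general G v w hvw
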